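/- arXiv:2508.00687 — 6 statements merged into one kernel-verified Lean document; each statement's English description precedes it below -/
import Mathlib

section
/- Let G = Z_{3,0}^8 ⋊ S_8 with S_8 acting by coordinate permutation, and let φ: G → S_8 be the canonical projection. If N is a normal subgroup of G with φ(N) = S_8, then N = G. -/
/-- The coordinate-sum homomorphism `(Z/kZ)^m → Z/kZ`. -/
def sumHom (k m : ℕ) : (Fin m → ZMod k) →+ ZMod k where
  toFun v := ∑ i, v i
  map_zero' := by simp
  map_add' x y := by simp [Finset.sum_add_distrib]

/-- `Z_{k,0}^m`, the subgroup of `(Z/kZ)^m` of tuples summing to zero. -/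
def sumKer (k m : ℕ) : AddSubgroup (Fin m → ZMod k) := (sumHom k m).ker

/-- The coordinate-permutation automorphism of `Z_{k,0}^m` induced by `σ`. -/
def permAutKer (k m : ℕ) (σ : Equiv.Perm (Fin m)) : ↥(sumKer k m) ≃+ ↥(sumKer k m) where
  toFun v := ⟨fun i => v.1 (σ.symm i), by
    have h := v.2
    simp only [sumKer, AddMonoidHom.mem_ker, sumHom, AddMonoidHom.coe_mk, ZeroHom.coe_mk] at h ⊢
    rw [Equiv.sum_comp σ.symm]
    exact h⟩
  invFun v := ⟨fun i => v.1 (σ i), by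
    have h := v.2
    simp only [sumKer, AddMonoidHom.mem_ker, sumHom, AddMonoidHom.coe_mk, ZeroHom.coe_mk] at h ⊢
    rw [Equiv.sum_comp σ]
    exact h⟩
  left_inv v := by ext i; simp
  right_inv v := by ext i; simp
  map_add' v w := rfl

/-- The multiplicative group structure on `AddAut A` that the older Mathlib provided. -/
instance AddAut.group (A : Type*) [Add A] : Group (AddAut A) where
  mul g h := AddEquiv.trans h g
  one := AddEquiv.refl _
  inv := AddEquiv.symm
  mul_assoc _ _ _ := rfl
  one_mul _ := rfl
  mul_one _ := rfl
  inv_mul_cancel := AddEquiv.self_trans_symm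

/-- The coordinate-permutation action of `S_m` on `Z_{k,0}^m`, as additive automorphisms. -/
def permHomKer (k m : ℕ) : Equiv.Perm (Fin m) →* AddAut ↥(sumKer k m) where
  toFun := permAutKer k m
  map_one' := rfl
  map_mul' σ τ := rfl

/-- The same action, on the multiplicative version of `Z_{k,0}^m`. -/
def permActM (k m : ℕ) : Equiv.Perm (Fin m) →* MulAut (Multiplicative ↥(sumKer k m)) where
  toFun σ := AddEquiv.toMultiplicative (permAutKer k m σ)
  map_one' := rfl
  map_mul' σ τ := rfl

/-- `G₂ = Z_{3,0}^8 ⋊ S_8`, with `S_8` acting by coordinate permutation. -/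
abbrev G2 := Multiplicative ↥(sumKer 3 8) ⋊[permActM 3 8] Equiv.Perm (Fin 8)

/-! If `g ∈ N` lies over `σ`, the commutator of `inl w` with `g` is `inl (w - σ • w)`, so `N`
contains `w - σ • w` for every `w` and `σ`. For the transposition `σ = (i j)` and `w = eᵢ - eⱼ`
this is `2 (eᵢ - eⱼ)`; as `2` is invertible mod `3`, `N` contains every `eᵢ - eⱼ`, and these
generate `Z_{3,0}^8`. A subgroup containing the kernel of `φ` and surjecting onto `S_8` is
everything. -/

namespace SemidirectProduct

variable {K G : Type*} [Group G]

theorem inl_mul_inv_apply_mem [CommGroup K] {φ : G →* MulAut K} {H : Subgroup (K ⋊[φ] G)}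
    (hH : H.Normal) {g : K ⋊[φ] G} (hg : g ∈ H) (n : K) : inl (n * (φ g.right n)⁻¹) ∈ H := by
  have hcomm : inl n * g * (inl n)⁻¹ * g⁻¹ ∈ H :=
    H.mul_mem (hH.conj_mem g hg _) (H.inv_mem hg)
  convert hcomm using 1
  ext
  · simp only [left_inl, mul_left, inv_left, right_inl, map_one, MulAut.one_apply, inv_right,
      mul_right, one_mul, inv_one, mul_one, map_inv, MulAut.apply_inv_self]
    rw [mul_right_comm n, mul_inv_cancel_right]
  · simp

theorem eq_top_of_map_rightHom_eq_top [Group K] {φ : G →* MulAut K} {H : Subgroup (K ⋊[φ] G)}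
    (hright : H.map rightHom = ⊤) (hleft : ∀ n, inl n ∈ H) : H = ⊤ := by
  have hker : rightHom.ker ≤ H := by
    rw [← range_inl_eq_ker_rightHom]
    rintro _ ⟨n, rfl⟩
    exact hleft n
  rw [← sup_eq_left.2 hker, ← Subgroup.comap_map_eq, hright, Subgroup.comap_top]

end SemidirectProduct

def sumKerSingleSub (k : ℕ) {m : ℕ} (i j : Fin m) : sumKer k m :=
  ⟨Pi.single i 1 - Pi.single j 1, by simp [sumKer, sumHom]⟩

theorem closure_range_sumKerSingleSub (k m : ℕ) [NeZero k] :
    AddSubgroup.closure (Set.range fun p : Fin m × Fin m => sumKerSingleSub k p.1 p.2) = ⊤ := by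
  rw [AddSubgroup.eq_top_iff']
  intro v
  rcases isEmpty_or_nonempty (Fin m) with _ | ⟨⟨j⟩⟩
  · rw [Subsingleton.elim v 0]
    exact zero_mem _
  have hv : v = ∑ i, (v.1 i).val • sumKerSingleSub k i j := by
    have hsum : ∑ i, v.1 i = 0 := v.2
    ext1
    simp only [AddSubgroup.val_finsetSum, AddSubmonoidClass.coe_nsmul, sumKerSingleSub, nsmul_sub,
      ← Pi.single_smul', nsmul_one, ZMod.natCast_zmod_val, Finset.sum_sub_distrib,
      Finset.univ_sum_single]
    funext l
    simp [Pi.single_apply, hsum]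
  rw [hv]
  exact sum_mem fun i _ => nsmul_mem (AddSubgroup.subset_closure (Set.mem_range_self (i, j))) _

theorem permAutKer_swap_sumKerSingleSub (k : ℕ) {m : ℕ} (i j : Fin m) :
    permAutKer k m (Equiv.swap i j) (sumKerSingleSub k i j) = -sumKerSingleSub k i j := by
  ext l
  simp [permAutKer, sumKerSingleSub, Pi.single_apply, Equiv.swap_apply_eq_iff]

theorem mem_of_two_nsmul_mem {M S : Type*} [AddMonoid M] [SetLike S M] [AddSubmonoidClass S M]
    {A : S} {k : ℕ} (hk : Odd k) {x : M} (hkx : k • x = 0) (hx : 2 • x ∈ A) : x ∈ A := by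
  obtain ⟨t, rfl⟩ := hk
  have : x = (t + 1) • 2 • x := by
    rw [← mul_nsmul', show (t + 1) * 2 = 2 * t + 1 + 1 by ring, succ_nsmul, hkx, zero_add]
  rw [this]
  exact nsmul_mem hx _

theorem sumKer_nsmul_eq_zero (k m : ℕ) (v : sumKer k m) : k • v = 0 := by
  ext i
  simp

theorem eq_top_of_sub_permAutKer_mem {k : ℕ} (hk : Odd k) (m : ℕ) (A : AddSubgroup (sumKer k m))
    (hA : ∀ σ w, w - permAutKer k m σ w ∈ A) : A = ⊤ := by
  have : NeZero k := ⟨hk.pos.ne'⟩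
  rw [eq_top_iff, ← closure_range_sumKerSingleSub k m, AddSubgroup.closure_le]
  rintro _ ⟨⟨i, j⟩, rfl⟩
  refine mem_of_two_nsmul_mem hk (sumKer_nsmul_eq_zero k m _) ?_
  simpa [permAutKer_swap_sumKerSingleSub, two_nsmul] using
    hA (Equiv.swap i j) (sumKerSingleSub k i j)

open SemidirectProduct

/-- if `N` is a normal subgroup of `G₂ = Z_{3,0}^8 ⋊ S_8` whose image under the
projection `φ : G₂ → S_8` is all of `S_8`, then `N = G₂`. -/
theorem stmt5 (N : Subgroup G2) (hN : N.Normal)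
    (h : N.map (SemidirectProduct.rightHom) = ⊤) : N = ⊤ := by
  have hcomm : ∀ σ w, w - permAutKer 3 8 σ w ∈ (N.comap inl).toAddSubgroup' := by
    intro σ w
    obtain ⟨g, hg, rfl⟩ := h ▸ Subgroup.mem_top σ
    rw [Subgroup.mem_toAddSubgroup', Subgroup.mem_comap, ofAdd_sub, div_eq_mul_inv]
    exact inl_mul_inv_apply_mem hN hg (Multiplicative.ofAdd w)
  have hleft := eq_top_of_sub_permAutKer_mem (by decide) 8 _ hcomm
  exact eq_top_of_map_rightHom_eq_top h fun n : Multiplicative (sumKer 3 8) =>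
    (Subgroup.mem_toAddSubgroup' _ n.toAdd).1 (hleft ▸ AddSubgroup.mem_top _)
end

section
/- Let P = {(σ, τ) ∈ S_{12} × S_8 : sign(σ) = sign(τ)}. Every normal subgroup of P is one of: the trivial group, 1 × A_8, A_{12} × 1, A_{12} × A_8, or P itself. -/
/-!
Let `|α|, |β| ≥ 5`, let `S ≤ S_α × S_β` be the subgroup of pairs with equal signs, and let
`M ≤ S` be normalised by `S`. Since `S` projects onto `S_α`, the projection of `M` to `S_α` is
normal in `S_α`, so if it is nontrivial it contains `A_α`. Commutators of `M` with `A_α × 1 ≤ S`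
lie in `M ∩ (S_α × 1)`, and they already give all of `[A_α, A_α] × 1 = A_α × 1`. The same holds
on the `β` side, which leaves `1`, `1 × A_β`, `A_α × 1`, or a group between `A_α × A_β` and `S`,
where the index is `2`.
-/

/-- `P`, the subgroup of `S_12 × S_8` of pairs of permutations with equal signs. -/
def P : Subgroup (Equiv.Perm (Fin 12) × Equiv.Perm (Fin 8)) where
  carrier := {p | Equiv.Perm.sign p.1 = Equiv.Perm.sign p.2}
  one_mem' := by simp
  mul_mem' := by
    intro x y hx hy
    simp only [Set.mem_setOf_eq, Prod.fst_mul, Prod.snd_mul, map_mul] at *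
    rw [hx, hy]
  inv_mem' := by
    intro x hx
    simp only [Set.mem_setOf_eq, Prod.fst_inv, Prod.snd_inv, map_inv] at *
    rw [hx]

open Equiv Equiv.Perm Subgroup

section ProdSubgroup

variable {G H : Type*} [Group G] [Group H] {S : Subgroup (G × H)} {N : Subgroup S}

theorem commutator_le_comap_inl_map_subtype (hN : N.Normal) {T : Subgroup G}
    (hT : ∀ t ∈ T, (t, 1) ∈ S) :
    ⁅T, N.map ((MonoidHom.fst G H).comp S.subtype)⁆ ≤
      (N.map S.subtype).comap (MonoidHom.inl G H) := by
  rw [commutator_le]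
  rintro t ht _ ⟨n, hn, rfl⟩
  let s : S := ⟨(t, 1), hT t ht⟩
  refine ⟨s * n * s⁻¹ * n⁻¹, N.mul_mem (hN.conj_mem n hn s) (N.inv_mem hn), ?_⟩
  ext <;> simp [s, commutatorElement_def]

theorem commutator_le_comap_inr_map_subtype (hN : N.Normal) {T : Subgroup H}
    (hT : ∀ t ∈ T, (1, t) ∈ S) :
    ⁅T, N.map ((MonoidHom.snd G H).comp S.subtype)⁆ ≤
      (N.map S.subtype).comap (MonoidHom.inr G H) := by
  rw [commutator_le]
  rintro t ht _ ⟨n, hn, rfl⟩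
  let s : S := ⟨(1, t), hT t ht⟩
  refine ⟨s * n * s⁻¹ * n⁻¹, N.mul_mem (hN.conj_mem n hn s) (N.inv_mem hn), ?_⟩
  ext <;> simp [s, commutatorElement_def]

end ProdSubgroup

namespace Equiv.Perm

variable (α β : Type*) [Fintype α] [DecidableEq α] [Fintype β] [DecidableEq β]

def sameSign : Subgroup (Perm α × Perm β) :=
  (sign.comp (MonoidHom.fst _ _)).eqLocus (sign.comp (MonoidHom.snd _ _))

variable {α β}

@[simp] theorem mem_sameSign {p : Perm α × Perm β} : p ∈ sameSign α β ↔ sign p.1 = sign p.2 :=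
  Iff.rfl

theorem eq_prod_alternatingGroup_or_eq_sameSign {M : Subgroup (Perm α × Perm β)}
    (hAM : (alternatingGroup α).prod (alternatingGroup β) ≤ M) (hMS : M ≤ sameSign α β) :
    M = (alternatingGroup α).prod (alternatingGroup β) ∨ M = sameSign α β := by
  refine or_iff_not_imp_left.2 fun hne => le_antisymm hMS fun s hs => ?_
  obtain ⟨x, hxM, hxA⟩ := SetLike.not_le_iff_exists.1 fun h => hne (le_antisymm h hAM)
  have hx : sign x.1 = -1 := by
    have := mem_sameSign.1 (hMS hxM)
    simp only [mem_prod, mem_alternatingGroup, ← this, and_self] at hxA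
    exact (Int.units_eq_one_or _).resolve_left hxA
  have hs' := mem_sameSign.1 hs
  rcases Int.units_eq_one_or (sign s.1) with h | h
  · exact hAM ⟨h, mem_alternatingGroup.2 (hs'.symm.trans h)⟩
  · have hxs : x⁻¹ * s ∈ M :=
      hAM ⟨by simp [hx, h], by simp [← hs', ← mem_sameSign.1 (hMS hxM), hx, h]⟩
    simpa using M.mul_mem hxM hxs

theorem eq_bot_or_eq_prod_alternatingGroup_or_eq_sameSign {M : Subgroup (Perm α × Perm β)}
    (hMS : M ≤ sameSign α β)
    (h₁ : (∃ g ∈ M, g.1 ≠ 1) → alternatingGroup α ≤ M.comap (MonoidHom.inl _ _))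
    (h₂ : (∃ g ∈ M, g.2 ≠ 1) → alternatingGroup β ≤ M.comap (MonoidHom.inr _ _)) :
    M = ⊥ ∨ M = (⊥ : Subgroup (Perm α)).prod (alternatingGroup β) ∨
      M = (alternatingGroup α).prod (⊥ : Subgroup (Perm β)) ∨
      M = (alternatingGroup α).prod (alternatingGroup β) ∨ M = sameSign α β := by
  have prod_le {H : Subgroup (Perm α)} {K : Subgroup (Perm β)}
      (hH : H ≤ M.comap (MonoidHom.inl _ _)) (hK : K ≤ M.comap (MonoidHom.inr _ _)) :
      H.prod K ≤ M :=
    prod_le_iff.2 ⟨map_le_iff_le_comap.2 hH, map_le_iff_le_comap.2 hK⟩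
  by_cases e₁ : ∃ g ∈ M, g.1 ≠ 1 <;> by_cases e₂ : ∃ g ∈ M, g.2 ≠ 1
  · exact Or.inr <| Or.inr <| Or.inr <| eq_prod_alternatingGroup_or_eq_sameSign
      (prod_le (h₁ e₁) (h₂ e₂)) hMS
  · push Not at e₂
    refine Or.inr <| Or.inr <| Or.inl <| le_antisymm (fun g hg => ?_) (prod_le (h₁ e₁) bot_le)
    have hg₂ := e₂ g hg
    exact ⟨mem_alternatingGroup.2 ((mem_sameSign.1 (hMS hg)).trans (by rw [hg₂, map_one])), hg₂⟩
  · push Not at e₁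
    refine Or.inr <| Or.inl <| le_antisymm (fun g hg => ?_) (prod_le bot_le (h₂ e₂))
    have hg₁ := e₁ g hg
    exact ⟨hg₁, mem_alternatingGroup.2
      ((mem_sameSign.1 (hMS hg)).symm.trans (by rw [hg₁, map_one]))⟩
  · push Not at e₁ e₂
    exact Or.inl <| (eq_bot_iff_forall M).2 fun g hg => Prod.ext (e₁ g hg) (e₂ g hg)

section Normal

variable {N : Subgroup (sameSign α β)}

theorem alternatingGroup_le_comap_inl_map_subtype [Nontrivial β] (h5 : 5 ≤ Nat.card α)
    (hN : N.Normal) {n : sameSign α β} (hn : n ∈ N) (hn₁ : (n : Perm α × Perm β).1 ≠ 1) :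
    alternatingGroup α ≤ (N.map (sameSign α β).subtype).comap (MonoidHom.inl _ _) := by
  set f := (MonoidHom.fst (Perm α) (Perm β)).comp (sameSign α β).subtype
  have hf : Function.Surjective f := fun σ => by
    obtain ⟨τ, hτ⟩ := sign_surjective β (sign σ)
    exact ⟨⟨(σ, τ), hτ.symm⟩, rfl⟩
  have : (N.map f).Normal := hN.map f hf
  have : Nontrivial (N.map f) := (nontrivial_iff_exists_ne_one _).2 ⟨f n, mem_map_of_mem f hn, hn₁⟩
  calc alternatingGroup α = ⁅alternatingGroup α, alternatingGroup α⁆ :=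
        (commutator_alternatingGroup_eq_self h5).symm
    _ ≤ ⁅alternatingGroup α, N.map f⁆ :=
        commutator_mono le_rfl (alternatingGroup_le_of_normal h5 this)
    _ ≤ _ := commutator_le_comap_inl_map_subtype hN fun t ht => by simpa using ht

theorem alternatingGroup_le_comap_inr_map_subtype [Nontrivial α] (h5 : 5 ≤ Nat.card β)
    (hN : N.Normal) {n : sameSign α β} (hn : n ∈ N) (hn₂ : (n : Perm α × Perm β).2 ≠ 1) :
    alternatingGroup β ≤ (N.map (sameSign α β).subtype).comap (MonoidHom.inr _ _) := by
  set f := (MonoidHom.snd (Perm α) (Perm β)).comp (sameSign α β).subtype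
  have hf : Function.Surjective f := fun τ => by
    obtain ⟨σ, hσ⟩ := sign_surjective α (sign τ)
    exact ⟨⟨(σ, τ), hσ⟩, rfl⟩
  have : (N.map f).Normal := hN.map f hf
  have : Nontrivial (N.map f) := (nontrivial_iff_exists_ne_one _).2 ⟨f n, mem_map_of_mem f hn, hn₂⟩
  calc alternatingGroup β = ⁅alternatingGroup β, alternatingGroup β⁆ :=
        (commutator_alternatingGroup_eq_self h5).symm
    _ ≤ ⁅alternatingGroup β, N.map f⁆ :=
        commutator_mono le_rfl (alternatingGroup_le_of_normal h5 this)
    _ ≤ _ := commutator_le_comap_inr_map_subtype hN fun t ht => by simpa [eq_comm] using ht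

theorem normal_subgroup_sameSign (h5α : 5 ≤ Nat.card α) (h5β : 5 ≤ Nat.card β) (hN : N.Normal) :
    N = ⊥ ∨
    N = comap (sameSign α β).subtype ((⊥ : Subgroup (Perm α)).prod (alternatingGroup β)) ∨
    N = comap (sameSign α β).subtype ((alternatingGroup α).prod (⊥ : Subgroup (Perm β))) ∨
    N = comap (sameSign α β).subtype ((alternatingGroup α).prod (alternatingGroup β)) ∨
    N = ⊤ := by
  have : Nontrivial α := Finite.one_lt_card_iff_nontrivial.1 (by omega)
  have : Nontrivial β := Finite.one_lt_card_iff_nontrivial.1 (by omega)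
  have hM := eq_bot_or_eq_prod_alternatingGroup_or_eq_sameSign
    (M := N.map (sameSign α β).subtype) (map_le_iff_le_comap.2 fun x _ => x.2)
    (fun ⟨_, ⟨n, hn, rfl⟩, hn₁⟩ => alternatingGroup_le_comap_inl_map_subtype h5α hN hn hn₁)
    (fun ⟨_, ⟨n, hn, rfl⟩, hn₂⟩ => alternatingGroup_le_comap_inr_map_subtype h5β hN hn hn₂)
  have hinj := (sameSign α β).subtype_injective
  have hN_eq : N = comap (sameSign α β).subtype (N.map (sameSign α β).subtype) :=
    (comap_map_eq_self_of_injective hinj N).symm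
  rcases hM with h | h | h | h | h
  · exact Or.inl ((map_eq_bot_iff_of_injective N hinj).1 h)
  · exact Or.inr <| Or.inl <| h ▸ hN_eq
  · exact Or.inr <| Or.inr <| Or.inl <| h ▸ hN_eq
  · exact Or.inr <| Or.inr <| Or.inr <| Or.inl <| h ▸ hN_eq
  · exact Or.inr <| Or.inr <| Or.inr <| Or.inr <| (h ▸ hN_eq).trans (subgroupOf_self _)

end Normal

end Equiv.Perm

/-- every normal subgroup of `P` is one of `1`, `1 × A_8`, `A_12 × 1`,
`A_12 × A_8`, or `P` itself. -/
theorem stmt9 (N : Subgroup ↥P) (hN : N.Normal) :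
    N = ⊥ ∨
    N = Subgroup.comap P.subtype
          ((⊥ : Subgroup (Equiv.Perm (Fin 12))).prod (alternatingGroup (Fin 8))) ∨
    N = Subgroup.comap P.subtype
          ((alternatingGroup (Fin 12)).prod (⊥ : Subgroup (Equiv.Perm (Fin 8)))) ∨
    N = Subgroup.comap P.subtype
          ((alternatingGroup (Fin 12)).prod (alternatingGroup (Fin 8))) ∨
    N = ⊤ :=
  -- `P` is definitionally `sameSign (Fin 12) (Fin 8)`
  normal_subgroup_sameSign (α := Fin 12) (β := Fin 8) (by simp) (by simp) hN
end

section
/- Let P = {(σ, τ) ∈ S_{12} × S_8 : sign(σ) = sign(τ)}. Then P contains no nontrivial normal 2-subgroup. -/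
open Equiv Function

theorem Equiv.Perm.eq_bot_of_normal_of_isPGroup_two {α : Type*} [Fintype α] [DecidableEq α]
    (hα : 5 ≤ Nat.card α) {N : Subgroup (Perm α)} (hN : N.Normal) (h2 : IsPGroup 2 N) :
    N = ⊥ := by
  by_contra hne
  have : Nontrivial α := Finite.one_lt_card_iff_nontrivial.mp (by omega)
  have hA : alternatingGroup α ≤ N :=
    alternatingGroup_le_of_normal hα ((Subgroup.nontrivial_iff_ne_bot N).mpr hne)
  obtain ⟨k, hk⟩ := IsPGroup.iff_card.mp (h2.to_le hA)
  have h3 : 3 ∣ 2 ^ (k + 1) := by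
    rw [pow_succ', ← hk, two_mul_nat_card_alternatingGroup, Nat.card_perm]
    exact Nat.dvd_factorial (by norm_num) (by omega)
  have := Nat.Prime.dvd_of_dvd_pow Nat.prime_three h3
  norm_num at this

theorem Subgroup.eq_bot_of_normal_of_isPGroup_of_surjective_fst_snd {G₁ G₂ : Type*} [Group G₁] [Group G₂]
    {p : ℕ} (Q : Subgroup (G₁ × G₂))
    (h₁ : Surjective ((MonoidHom.fst G₁ G₂).comp Q.subtype))
    (h₂ : Surjective ((MonoidHom.snd G₁ G₂).comp Q.subtype))
    (hG₁ : ∀ M : Subgroup G₁, M.Normal → IsPGroup p M → M = ⊥)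
    (hG₂ : ∀ M : Subgroup G₂, M.Normal → IsPGroup p M → M = ⊥)
    {N : Subgroup Q} (hN : N.Normal) (hp : IsPGroup p N) : N = ⊥ := by
  have hfst := N.map_eq_bot_iff.mp (hG₁ _ (hN.map _ h₁) (hp.map _))
  have hsnd := N.map_eq_bot_iff.mp (hG₂ _ (hN.map _ h₂) (hp.map _))
  exact (eq_bot_iff_forall N).mpr fun u hu ↦ Subtype.ext (Prod.ext (hfst hu) (hsnd hu))

theorem P_fst_surjective :
    Surjective ((MonoidHom.fst (Perm (Fin 12)) (Perm (Fin 8))).comp P.subtype) := fun σ ↦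
  let ⟨τ, hτ⟩ := Perm.sign_surjective (Fin 8) (Perm.sign σ)
  ⟨⟨(σ, τ), hτ.symm⟩, rfl⟩

theorem P_snd_surjective :
    Surjective ((MonoidHom.snd (Perm (Fin 12)) (Perm (Fin 8))).comp P.subtype) := fun τ ↦
  let ⟨σ, hσ⟩ := Perm.sign_surjective (Fin 12) (Perm.sign τ)
  ⟨⟨(σ, τ), hσ⟩, rfl⟩

/-- `P` contains no nontrivial normal 2-subgroup. -/
theorem stmt10 (N : Subgroup ↥P) (hN : N.Normal) (h2 : IsPGroup 2 N) : N = ⊥ :=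
  Subgroup.eq_bot_of_normal_of_isPGroup_of_surjective_fst_snd P P_fst_surjective P_snd_surjective
    (fun _ ↦ Perm.eq_bot_of_normal_of_isPGroup_two (by simp))
    (fun _ ↦ Perm.eq_bot_of_normal_of_isPGroup_two (by simp)) hN h2
end

section
/- Every finite abelian group A with invariant factor decomposition A ≅ Z_{d_1} ⊕ ... ⊕ Z_{d_s} (with d_1 | d_2 | ... | d_s) admits a faithful complex representation of dimension s, and every faithful complex representation of A has dimension at least s. Hence the minimal faithful complex dimension of A equals the number of invariant factors. -/
/-!
The endomorphisms by which a commutative monoid of exponent `p` acts faithfully commute and are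
annihilated by `X ^ p - 1`, which is separable when `p ≠ 0` in the field; so they are
simultaneously diagonalisable over an algebraically closed field. An element is then determined by its
eigenvalues on the nonzero joint eigenspaces, which are `p`-th roots of unity, and there are at
most `dim V` such eigenspaces; so the monoid has at most `p ^ dim V` elements.

For a prime `p ∣ d₁`, the group `A ≅ ⊕ ZMod dᵢ` contains `(ZMod p) ^ s`, so a faithful
representation of `A` of dimension `n` gives `p ^ s ≤ p ^ n`. Conversely, a faithful character
`ZMod dᵢ → ℂˣ` of each cyclic factor assembles into a faithful diagonal representation.
-/

open Module Polynomial

namespace Module.End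

variable {K V : Type*} [Field K] [AddCommGroup V] [Module K V]

theorem isSemisimple_of_pow_eq_one {f : End K V} {p : ℕ} (hp : (p : K) ≠ 0) (hf : f ^ p = 1) :
    f.IsSemisimple :=
  isSemisimple_of_squarefree_aeval_eq_zero (separable_X_pow_sub_C 1 hp one_ne_zero).squarefree
    (by simp [hf])

theorem HasEigenvector.pow_eq_one {f : End K V} {μ : K} {v : V} (hv : f.HasEigenvector μ v)
    {p : ℕ} (hf : f ^ p = 1) : μ ^ p = 1 :=
  smul_left_injective K hv.2 (by simpa [hf] using (hv.pow_apply p).symm)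

variable {ι : Type*} {f : ι → End K V}

theorem iSupIndep_iInf_eigenspace (hf : ∀ i, (f i).IsSemisimple)
    (hc : ∀ i j, Commute (f i) (f j)) :
    iSupIndep fun χ : ι → K ↦ ⨅ i, (f i).eigenspace (χ i) := by
  simpa only [fun i ↦ (hf i).isFinitelySemisimple.maxGenEigenspace_eq_eigenspace] using
    independent_iInf_maxGenEigenspace_of_forall_mapsTo f
      fun i j μ ↦ mapsTo_maxGenEigenspace_of_comm (hc j i) μ

theorem eq_of_iSup_iInf_eigenspace_eq_top (htop : ⨆ χ : ι → K, ⨅ i, (f i).eigenspace (χ i) = ⊤)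
    {i j : ι} (h : ∀ χ : ι → K, ⨅ k, (f k).eigenspace (χ k) ≠ ⊥ → χ i = χ j) : f i = f j := by
  suffices ⊤ ≤ LinearMap.eqLocus (f i) (f j) from LinearMap.ext fun v ↦ this Submodule.mem_top
  refine htop ▸ iSup_le fun χ ↦ ?_
  by_cases hχ : ⨅ k, (f k).eigenspace (χ k) = ⊥
  · simp [hχ]
  intro v hv
  have hv := Submodule.mem_iInf _ |>.mp hv
  simp only [LinearMap.mem_eqLocus, mem_eigenspace_iff.mp (hv i),
    mem_eigenspace_iff.mp (hv j), h χ hχ]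

variable [IsAlgClosed K] [FiniteDimensional K V]

theorem iSup_iInf_eigenspace_eq_top_of_commute (hf : ∀ i, (f i).IsSemisimple)
    (hc : ∀ i j, Commute (f i) (f j)) :
    ⨆ χ : ι → K, ⨅ i, (f i).eigenspace (χ i) = ⊤ := by
  simpa only [fun i ↦ (hf i).isFinitelySemisimple.maxGenEigenspace_eq_eigenspace] using
    iSup_iInf_maxGenEigenspace_eq_top_of_iSup_maxGenEigenspace_eq_top_of_commute f
      (fun i j _ ↦ hc i j) fun i ↦ iSup_maxGenEigenspace_eq_top (f i)

theorem _root_.MonoidHom.card_le_pow_finrank_of_injective {G : Type*} [CommMonoid G] {p : ℕ}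
    (hp : (p : K) ≠ 0) (hG : ∀ g : G, g ^ p = 1) (ρ : G →* End K V)
    (hρ : Function.Injective ρ) :
    Nat.card G ≤ p ^ finrank K V := by
  classical
  have hp0 : 0 < p := Nat.pos_of_ne_zero (by rintro rfl; simp at hp)
  have hpow (g : G) : ρ g ^ p = 1 := by rw [← map_pow, hG, map_one]
  have hss (g : G) : (ρ g).IsSemisimple := isSemisimple_of_pow_eq_one hp (hpow g)
  have hc (g h : G) : Commute (ρ g) (ρ h) := (Commute.all g h).map ρ
  let W : (G → K) → Submodule K V := fun χ ↦ ⨅ g, (ρ g).eigenspace (χ g)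
  have hind : iSupIndep W := iSupIndep_iInf_eigenspace hss hc
  let _ := hind.fintypeNeBotOfFiniteDimensional
  let T := {χ // W χ ≠ ⊥}
  have hroot (χ : T) (g : G) : χ.1 g ∈ nthRootsFinset p (1 : K) := by
    obtain ⟨v, hv, hv0⟩ := Submodule.exists_mem_ne_zero_of_ne_bot χ.2
    rw [mem_nthRootsFinset hp0]
    exact HasEigenvector.pow_eq_one ⟨Submodule.mem_iInf _ |>.mp hv g, hv0⟩ (hpow g)
  have hinj : Function.Injective fun g (χ : T) ↦ (⟨χ.1 g, hroot χ g⟩ : nthRootsFinset p (1 : K)) :=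
    fun g h hgh ↦ hρ <| eq_of_iSup_iInf_eigenspace_eq_top
      (iSup_iInf_eigenspace_eq_top_of_commute hss hc)
      fun χ hχ ↦ congrArg Subtype.val (congrFun hgh ⟨χ, hχ⟩)
  have hcard : (nthRootsFinset p (1 : K)).card ≤ p := by
    rw [nthRootsFinset_def]
    exact (Multiset.toFinset_card_le _).trans (card_nthRoots p 1)
  calc Nat.card G ≤ Nat.card (T → nthRootsFinset p (1 : K)) :=
        Nat.card_le_card_of_injective _ hinj
    _ = (nthRootsFinset p (1 : K)).card ^ Fintype.card T := by simp
    _ ≤ p ^ Fintype.card T := Nat.pow_le_pow_left hcard _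
    _ ≤ p ^ finrank K V := Nat.pow_le_pow_right hp0 hind.subtype_ne_bot_le_finrank

end Module.End

theorem ZMod.exists_addMonoidHom_injective_of_dvd {p m : ℕ} [NeZero m] (h : p ∣ m) :
    ∃ φ : ZMod p →+ ZMod m, Function.Injective φ := by
  obtain ⟨k, rfl⟩ := h
  have hk : (k : ℤ) ≠ 0 := by exact_mod_cast right_ne_zero_of_mul (NeZero.ne (p * k))
  refine ⟨ZMod.lift p ⟨zmultiplesHom _ (k : ZMod (p * k)), by simp [← Nat.cast_mul]⟩,
    (injective_iff_map_eq_zero _).2 fun x hx ↦ ?_⟩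
  obtain ⟨a, rfl⟩ := ZMod.intCast_surjective x
  have hx : ((a * k : ℤ) : ZMod (p * k)) = 0 := by simpa using hx
  rw [ZMod.intCast_zmod_eq_zero_iff_dvd, Nat.cast_mul] at hx
  rw [ZMod.intCast_zmod_eq_zero_iff_dvd]
  exact Int.dvd_of_mul_dvd_mul_right hk hx

theorem Matrix.GeneralLinearGroup.exists_injective_pi_zmod {ι : Type*} [Fintype ι] [DecidableEq ι]
    (d : ι → ℕ) [∀ i, NeZero (d i)] :
    ∃ ρ : Multiplicative (∀ i, ZMod (d i)) →* GL ι ℂ, Function.Injective ρ := by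
  let diag : (ι → ℂˣ) →* GL ι ℂ :=
    (Units.map (Matrix.diagonalRingHom ι ℂ).toMonoidHom).comp MulEquiv.piUnits.symm.toMonoidHom
  let χ : Multiplicative (∀ i, ZMod (d i)) →* (ι → ℂˣ) := MonoidHom.pi fun i ↦
    Circle.toUnits.comp (ZMod.toCircle.toMonoidHom.comp (Pi.evalAddMonoidHom _ i).toMultiplicative)
  have hdiag : Function.Injective diag :=
    (Units.map_injective Matrix.diagonal_injective).comp MulEquiv.piUnits.symm.injective
  have hχ : Function.Injective χ := fun a b hab ↦ funext fun i ↦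
    ZMod.injective_toCircle <| Subtype.ext <| congrArg Units.val (congrFun hab i)
  exact ⟨diag.comp χ, hdiag.comp hχ⟩

theorem Matrix.GeneralLinearGroup.card_le_of_injective_pi_zmod {ι m K : Type*} [Fintype ι]
    [Fintype m] [DecidableEq m] [Field K] [IsAlgClosed K] {d : ι → ℕ} [∀ i, NeZero (d i)]
    {p : ℕ} (hp : p.Prime) (hpK : (p : K) ≠ 0) (hpd : ∀ i, p ∣ d i)
    (ρ : Multiplicative (∀ i, ZMod (d i)) →* GL m K) (hρ : Function.Injective ρ) :
    Fintype.card ι ≤ Fintype.card m := by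
  choose φ hφ using fun i ↦ ZMod.exists_addMonoidHom_injective_of_dvd (hpd i)
  let ψ := (AddMonoidHom.piMap φ).toMultiplicative
  have hψ : Function.Injective ψ := Pi.map_injective.2 hφ
  let toEnd : GL m K →* End K (m → K) :=
    Matrix.toLinAlgEquiv'.toRingEquiv.toMonoidHom.comp (Units.coeHom _)
  have htoEnd : Function.Injective toEnd :=
    Matrix.toLinAlgEquiv'.injective.comp Units.val_injective
  have hG (g : Multiplicative (ι → ZMod p)) : g ^ p = 1 := by
    ext i
    simp
  have := (toEnd.comp (ρ.comp ψ)).card_le_pow_finrank_of_injective hpK hG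
    (htoEnd.comp (hρ.comp hψ))
  rw [Nat.card_congr Multiplicative.toAdd, Nat.card_pi] at this
  simp only [Nat.card_zmod, Finset.prod_const, Finset.card_univ,
    finrank_fintype_fun_eq_card] at this
  exact (Nat.pow_le_pow_iff_right hp.one_lt).1 this

theorem stmt11_general (A : Type) [AddCommGroup A] (s : ℕ) (d : Fin s → ℕ)
    (hd : ∀ i, 1 < d i) (hdvd : ∀ i j : Fin s, i ≤ j → d i ∣ d j)
    (hiso : Nonempty (A ≃+ ∀ i : Fin s, ZMod (d i))) :
    (∃ ρ : Multiplicative A →* Matrix.GeneralLinearGroup (Fin s) ℂ, Function.Injective ρ) ∧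
    (∀ n : ℕ, ∀ ρ : Multiplicative A →* Matrix.GeneralLinearGroup (Fin n) ℂ,
      Function.Injective ρ → s ≤ n) := by
  obtain ⟨e⟩ := hiso
  have (i : Fin s) : NeZero (d i) := ⟨(zero_lt_one.trans (hd i)).ne'⟩
  constructor
  · obtain ⟨ρ, hρ⟩ := Matrix.GeneralLinearGroup.exists_injective_pi_zmod d
    exact ⟨ρ.comp e.toMultiplicative.toMonoidHom, hρ.comp e.toMultiplicative.injective⟩
  intro n ρ hρ
  cases s with
  | zero => exact n.zero_le
  | succ s =>
    have hp := Nat.minFac_prime (hd 0).ne'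
    have hpd (i : Fin (s + 1)) : (d 0).minFac ∣ d i :=
      (d 0).minFac_dvd.trans (hdvd 0 i (Fin.zero_le i))
    simpa using Matrix.GeneralLinearGroup.card_le_of_injective_pi_zmod hp
      (Nat.cast_ne_zero.2 hp.ne_zero) hpd (ρ.comp e.symm.toMultiplicative.toMonoidHom)
      (hρ.comp e.symm.toMultiplicative.injective)

/-- a finite abelian group with invariant factor decomposition
`A ≅ Z_{d_1} ⊕ ... ⊕ Z_{d_s}` (with `d_1 | d_2 | ... | d_s`) admits a faithful
complex representation of dimension `s`, and every faithful complex representation of `A`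
has dimension at least `s`; hence the minimal faithful complex dimension of `A` is `s`. -/
theorem stmt11 (A : Type) [AddCommGroup A] [Fintype A] (s : ℕ) (d : Fin s → ℕ)
    (hd : ∀ i, 1 < d i) (hdvd : ∀ i j : Fin s, i ≤ j → d i ∣ d j)
    (hiso : Nonempty (A ≃+ ∀ i : Fin s, ZMod (d i))) :
    (∃ ρ : Multiplicative A →* Matrix.GeneralLinearGroup (Fin s) ℂ, Function.Injective ρ) ∧
    (∀ n : ℕ, ∀ ρ : Multiplicative A →* Matrix.GeneralLinearGroup (Fin n) ℂ,
      Function.Injective ρ → s ≤ n) :=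
  stmt11_general A s d hd hdvd hiso
end

section
/- Let G = A ⋊ H be a semidirect product of a finite abelian group A by a finite group H such that the action map H → Aut(A) is injective. Suppose (π, V) is a faithful finite-dimensional complex representation of G and V decomposes as a direct sum of p one-dimensional A-invariant subspaces V_1, ..., V_p permuted by the π(h) for h ∈ H. Then the induced homomorphism H → S_p is injective; in particular dim_C V ≥ μ(H), the minimal permutation degree of H. -/
/-!
If `h ∈ H` fixes every line `W i`, then `π (inr h)` and every `π (inl a)` act on each line by
scalars, so they commute. Hence `π (inl (φ h a)) = π (inr h) π (inl a) π (inr h)⁻¹ = π (inl a)`,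
and faithfulness of `π` and of `φ` force `h = 1`. The bound on `μ(H)` follows because the lines
of an internal direct sum are distinct and their number is `dim V`.
-/

open SemidirectProduct

theorem SemidirectProduct.eq_one_of_forall_commute_inl {N G M : Type*} [Group N] [Group G]
    [Monoid M] {φ : G →* MulAut N} (hφ : Function.Injective φ) (π : N ⋊[φ] G →* M)
    (hπ : Function.Injective π) {g : G} (hg : ∀ n, Commute (π (inr g)) (π (inl n))) :
    g = 1 := by
  refine hφ (MulEquiv.ext fun n => inl_injective (hπ ?_))
  have hconj : π (inl (φ g n)) = π (inr g) * π (inl n) * π (inr g⁻¹) := by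
    rw [inl_aut, map_mul, map_mul]
  rw [hconj, (hg n).eq, mul_assoc, ← map_mul, ← map_mul inr, mul_inv_cancel, map_one, map_one,
    mul_one, map_one, MulAut.one_apply]

section Lines

variable {K V ι : Type*} [Field K] [AddCommGroup V] [Module K V]

theorem Submodule.exists_eq_smul_of_mapsTo_of_finrank_eq_one {U : Submodule K V}
    (hU : Module.finrank K U = 1) {T : V →ₗ[K] V} (hT : ∀ v ∈ U, T v ∈ U) :
    ∃ c : K, ∀ v ∈ U, T v = c • v := by
  have : Module.Finite K U := Module.finite_of_finrank_eq_succ hU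
  obtain ⟨c, hc, -⟩ := (T.restrict hT).existsUnique_eq_smul_id_of_finrank_eq_one hU
  exact ⟨c, fun v hv => congrArg Subtype.val (LinearMap.congr_fun hc ⟨v, hv⟩)⟩

theorem commute_of_mapsTo_lines {W : ι → Submodule K V} (hW : ⨆ i, W i = ⊤)
    (hdim : ∀ i, Module.finrank K (W i) = 1) {S T : V →ₗ[K] V}
    (hS : ∀ i, ∀ v ∈ W i, S v ∈ W i) (hT : ∀ i, ∀ v ∈ W i, T v ∈ W i) :
    Commute S T := by
  refine LinearMap.ext_on (s := ⋃ i, (W i : Set V)) (by rw [← Submodule.iSup_eq_span, hW]) ?_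
  rintro v ⟨_, ⟨i, rfl⟩, hv⟩
  obtain ⟨c, hc⟩ := Submodule.exists_eq_smul_of_mapsTo_of_finrank_eq_one (hdim i) (hS i)
  obtain ⟨d, hd⟩ := Submodule.exists_eq_smul_of_mapsTo_of_finrank_eq_one (hdim i) (hT i)
  simp only [Module.End.mul_apply, hc v hv, hd v hv, map_smul, smul_smul, mul_comm c d]

theorem DirectSum.IsInternal.finrank_eq_card_of_finrank_eq_one [Fintype ι] [DecidableEq ι]
    {W : ι → Submodule K V} (hW : DirectSum.IsInternal W)
    (hdim : ∀ i, Module.finrank K (W i) = 1) :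
    Module.finrank K V = Fintype.card ι := by
  have := fun i => Module.finite_of_finrank_eq_succ (hdim i)
  rw [← (LinearEquiv.ofBijective (DirectSum.coeLinearMap W) hW).finrank_eq,
    Module.finrank_directSum]
  simp [hdim]

end Lines

theorem exists_monoidHom_perm_of_map_eq {G R M ι : Type*} [Group G] [Semiring R]
    [AddCommMonoid M] [Module R M] (ρ : G →* (M ≃ₗ[R] M)) {W : ι → Submodule R M}
    (hW : Function.Injective W)
    (hρ : ∀ g, ∃ σ : Equiv.Perm ι, ∀ i, (W i).map (ρ g : M →ₗ[R] M) = W (σ i)) :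
    ∃ f : G →* Equiv.Perm ι, ∀ g i, (W i).map (ρ g : M →ₗ[R] M) = W (f g i) := by
  choose σ hσ using hρ
  refine ⟨MonoidHom.mk' σ fun g₁ g₂ => Equiv.ext fun i => hW ?_, hσ⟩
  rw [← hσ, map_mul]
  change (W i).map ((ρ g₁ : M →ₗ[R] M) ∘ₗ (ρ g₂ : M →ₗ[R] M)) = _
  rw [Submodule.map_comp, hσ, hσ]
  rfl

theorem stmt16_general (A : Type) [CommGroup A] (H : Type) [Group H]
    (φ : H →* MulAut A) (hφ : Function.Injective φ)
    (V : Type) [AddCommGroup V] [Module ℂ V]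
    (π : (A ⋊[φ] H) →* (V ≃ₗ[ℂ] V)) (hπ : Function.Injective π)
    (p : ℕ) (W : Fin p → Submodule ℂ V)
    (hint : DirectSum.IsInternal W)
    (hdim : ∀ i, Module.finrank ℂ (W i) = 1)
    (hAinv : ∀ a : A, ∀ i, ∀ v ∈ W i, π (SemidirectProduct.inl a) v ∈ W i)
    (hperm : ∀ h : H, ∃ σ : Equiv.Perm (Fin p), ∀ i,
      (W i).map (π (SemidirectProduct.inr h) : V →ₗ[ℂ] V) = W (σ i)) :
    (∃ f : H →* Equiv.Perm (Fin p), Function.Injective f ∧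
      ∀ h i, (W i).map (π (SemidirectProduct.inr h) : V →ₗ[ℂ] V) = W (f h i)) ∧
    sInf {n : ℕ | ∃ f : H →* Equiv.Perm (Fin n), Function.Injective f} ≤
      Module.finrank ℂ V := by
  have hW : Function.Injective W := hint.submodule_iSupIndep.injective fun i hi => by
    have h1 := hdim i
    rw [hi, finrank_bot] at h1
    exact zero_ne_one h1
  obtain ⟨f, hf⟩ := exists_monoidHom_perm_of_map_eq (π.comp inr) hW hperm
  have hf_inj : Function.Injective f := by
    refine (injective_iff_map_eq_one f).2 fun h hh => ?_
    have hfix : ∀ i, ∀ v ∈ W i, π (inr h) v ∈ W i := fun i v hv => by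
      have hmap := hf h i
      rw [hh, Equiv.Perm.one_apply] at hmap
      exact hmap ▸ Submodule.mem_map_of_mem hv
    exact eq_one_of_forall_commute_inl hφ
      (LinearEquiv.automorphismGroup.toLinearMapMonoidHom.comp π)
      (LinearEquiv.toLinearMap_injective.comp hπ) fun a =>
        commute_of_mapsTo_lines hint.submodule_iSup_eq_top hdim hfix (hAinv a)
  refine ⟨⟨f, hf_inj, hf⟩, ?_⟩
  rw [hint.finrank_eq_card_of_finrank_eq_one hdim, Fintype.card_fin]
  exact Nat.sInf_le ⟨f, hf_inj⟩

/-- let `G = A ⋊ H` with `A` finite abelian, `H` finite, and the action map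
`H → Aut(A)` injective. If `(π, V)` is a faithful complex representation of `G` and `V`
decomposes as a direct sum of one-dimensional `A`-invariant subspaces `V_1, ..., V_p`
permuted by the `π(h)`, then the induced homomorphism `H → S_p` is injective; in particular
`dim_ℂ V ≥ μ(H)`, the minimal permutation degree of `H`. -/
theorem stmt16 (A : Type) [CommGroup A] [Fintype A] (H : Type) [Group H] [Fintype H]
    (φ : H →* MulAut A) (hφ : Function.Injective φ)
    (V : Type) [AddCommGroup V] [Module ℂ V] [FiniteDimensional ℂ V]
    (π : (A ⋊[φ] H) →* (V ≃ₗ[ℂ] V)) (hπ : Function.Injective π)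
    (p : ℕ) (W : Fin p → Submodule ℂ V)
    (hint : DirectSum.IsInternal W)
    (hdim : ∀ i, Module.finrank ℂ (W i) = 1)
    (hAinv : ∀ a : A, ∀ i, ∀ v ∈ W i, π (SemidirectProduct.inl a) v ∈ W i)
    (hperm : ∀ h : H, ∃ σ : Equiv.Perm (Fin p), ∀ i,
      (W i).map (π (SemidirectProduct.inr h) : V →ₗ[ℂ] V) = W (σ i)) :
    (∃ f : H →* Equiv.Perm (Fin p), Function.Injective f ∧
      ∀ h i, (W i).map (π (SemidirectProduct.inr h) : V →ₗ[ℂ] V) = W (f h i)) ∧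
    sInf {n : ℕ | ∃ f : H →* Equiv.Perm (Fin n), Function.Injective f} ≤
      Module.finrank ℂ V :=
  stmt16_general A H φ hφ V π hπ p W hint hdim hAinv hperm
end

section
/- Let m be a natural number with m ≠ 2 and m ≠ 4. Then the symmetric group S_m has no nontrivial normal subgroup whose order is a power of 2. -/
/-!
A 2-group has no element of order 3. For `m ≥ 5`, a nontrivial normal subgroup of `S_m` contains
the alternating group, hence a 3-cycle. For `m = 3`, each commutator `⁅x, g⁆` with `x ∈ N` is an
even permutation lying in `N`, and even permutations of three letters have order dividing 3; so
`N` is central, and the centre of `S_3` is trivial.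
-/

open Equiv Equiv.Perm Finset
open scoped commutatorElement

theorem IsPGroup.eq_one_of_pow_eq_one {p n : ℕ} {G : Type*} [Group G] (hG : IsPGroup p G)
    (hn : p.Coprime n) {g : G} (hg : g ^ n = 1) : g = 1 :=
  (hG.powEquiv hn).injective (by simp [hg])

theorem Subgroup.eq_one_of_isPGroup_of_pow_eq_one {p n : ℕ} {G : Type*} [Group G]
    {N : Subgroup G} (hN : IsPGroup p N) (hn : p.Coprime n) {g : G} (hgN : g ∈ N)
    (hg : g ^ n = 1) : g = 1 := by
  simpa using hN.eq_one_of_pow_eq_one hn (g := ⟨g, hgN⟩) (Subtype.ext hg)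

namespace Equiv.Perm

variable {α : Type*} [DecidableEq α] [Fintype α]

theorem eq_one_of_forall_commute (hα : 2 < Fintype.card α) {x : Perm α}
    (hx : ∀ g : Perm α, Commute x g) : x = 1 := by
  by_contra hx1
  obtain ⟨a, ha⟩ : ∃ a, x a ≠ a := by
    by_contra! h
    exact hx1 (Equiv.ext h)
  obtain ⟨c, -, hc⟩ := exists_mem_notMem_of_card_lt_card
    (card_le_two.trans_lt hα : #{a, x a} < #(univ : Finset α))
  obtain ⟨hca, hcx⟩ : c ≠ a ∧ c ≠ x a := by simpa [not_or] using hc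
  have hxc : x c = x a := by
    simpa [swap_apply_of_ne_of_ne ha hcx.symm] using congr($(hx (swap a c)) a)
  exact hca (x.injective hxc)

theorem pow_three_eq_one_of_sign_eq_one (hα : Fintype.card α = 3) {σ : Perm α}
    (hσ : sign σ = 1) : σ ^ 3 = 1 := by
  have hA : Fintype.card (alternatingGroup α) = 3 := by
    have : Nontrivial α := Fintype.one_lt_card_iff_nontrivial.mp (by omega)
    rw [card_alternatingGroup, hα]
    rfl
  simpa [← hA] using congr_arg Subtype.val (pow_card_eq_one (x := (⟨σ, hσ⟩ : alternatingGroup α)))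

variable {p : ℕ} {N : Subgroup (Perm α)} [N.Normal]

theorem eq_bot_of_isPGroup_of_card_eq_three (hα : Fintype.card α = 3) (hp : p.Coprime 3)
    (hN : IsPGroup p N) : N = ⊥ := by
  refine N.eq_bot_iff_forall.mpr fun x hx ↦ eq_one_of_forall_commute (by omega) fun g ↦ ?_
  have hxgN : ⁅x, g⁆ ∈ N :=
    Subgroup.commutator_le_left N ⊤ (Subgroup.commutator_mem_commutator hx (Subgroup.mem_top g))
  have hxg3 : ⁅x, g⁆ ^ 3 = 1 := pow_three_eq_one_of_sign_eq_one hα <| by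
    rw [map_commutatorElement, commutatorElement_eq_one_iff_commute]
    exact Commute.all _ _
  exact commutatorElement_eq_one_iff_commute.mp
    (Subgroup.eq_one_of_isPGroup_of_pow_eq_one hN hp hxgN hxg3)

theorem eq_bot_of_isPGroup_of_five_le_card (hα : 5 ≤ Fintype.card α) (hp : p.Coprime 3)
    (hN : IsPGroup p N) : N = ⊥ := by
  by_contra hN1
  have hAN : alternatingGroup α ≤ N :=
    alternatingGroup_le_of_normal (by simpa) ((Subgroup.nontrivial_iff_ne_bot N).mpr hN1)
  obtain ⟨a, b, c, hab, hac, hbc⟩ := Fintype.two_lt_card_iff.mp (by omega : 2 < Fintype.card α)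
  have h3 := isThreeCycle_swap_mul_swap_same hab hac hbc
  exact h3.ne_one <| Subgroup.eq_one_of_isPGroup_of_pow_eq_one hN hp
    (hAN h3.mem_alternatingGroup) (h3.orderOf ▸ pow_orderOf_eq_one _)

end Equiv.Perm

/-- for `m ≠ 2` and `m ≠ 4`, the symmetric group `S_m` has no nontrivial
normal subgroup of 2-power order. -/
theorem stmt17 (m : ℕ) (hm2 : m ≠ 2) (hm4 : m ≠ 4)
    (N : Subgroup (Equiv.Perm (Fin m))) (hN : N.Normal) (h2 : IsPGroup 2 N) :
    N = ⊥ := by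
  have hp : Nat.Coprime 2 3 := by norm_num
  rcases (by omega : m ≤ 1 ∨ m = 3 ∨ 5 ≤ m) with hm | rfl | hm
  · have : Subsingleton (Fin m) := Fin.subsingleton_iff_le_one.mpr hm
    exact Subgroup.eq_bot_of_subsingleton N
  · exact eq_bot_of_isPGroup_of_card_eq_three (Fintype.card_fin 3) hp h2
  · exact eq_bot_of_isPGroup_of_five_le_card (by simpa) hp h2
end
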